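/- arXiv:1506.00242 — 4 statements merged into one kernel-verified Lean document; each statement's English description precedes it below -/
import Mathlib

section
/- Let V be a finite vertex set partitioned into a protected set P and a targeted set T, and define the common-neighbors statistic CN(G, v, S) = |{u : (v,u) is an edge of G and (u,v') is an edge of G for some v' ∈ S}|. Then CN has targeted sensitivity at most 1: for every pair of graphs G, G' neighboring with respect to (P,T), every t ∈ T, and every S ⊆ T, |CN(G,t,S) − CN(G',t,S)| ≤ 1. -/
/-- Two simple graphs on `V` are *neighboring* with respect to a protected set `P`
if one can be obtained from the other by arbitrarily rewiring the edges incident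
to a single protected vertex `v ∈ P`. -/
def Neighboring {V : Type*} (P : Set V) (G G' : SimpleGraph V) : Prop :=
  ∃ v ∈ P, ∀ a b : V, a ≠ v → b ≠ v → (G.Adj a b ↔ G'.Adj a b)

/-- The common-neighbors statistic of proximity:
`CN(G, v, S)` is the number of vertices `u` adjacent to `v` that are also
adjacent to some vertex of `S`. -/
noncomputable def CN {V : Type*} (G : SimpleGraph V) (v : V) (S : Set V) : ℕ :=
  Set.ncard {u : V | G.Adj v u ∧ ∃ v' ∈ S, G.Adj u v'}

lemma cn_aux {V : Type*} [Fintype V] {A B : Set V} {v : V}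
    (h : A \ {v} = B \ {v}) : A.ncard ≤ B.ncard + 1 := by
  have hsub : A ⊆ B ∪ {v} := by
    intro u hu
    by_cases huv : u = v
    · exact Or.inr huv
    · have : u ∈ A \ {v} := ⟨hu, huv⟩
      rw [h] at this
      exact Or.inl this.1
  calc A.ncard ≤ (B ∪ {v}).ncard := Set.ncard_le_ncard hsub (Set.toFinite _)
    _ ≤ B.ncard + ({v} : Set V).ncard := Set.ncard_union_le _ _
    _ = B.ncard + 1 := by simp

/-- The common-neighbors statistic `CN` has targeted sensitivity at most `1`:
for every partition of the finite vertex set `V` into a protected set `P` and a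
targeted set `T`, every pair of graphs `G, G'` neighboring with respect to
`(P, T)`, every targeted vertex `t ∈ T`, and every `S ⊆ T`,
`|CN(G,t,S) − CN(G',t,S)| ≤ 1`. -/
theorem cn_targeted_sensitivity_le_one {V : Type*} [Fintype V]
    (P T : Set V) (hUnion : P ∪ T = Set.univ) (hDisj : Disjoint P T)
    (G G' : SimpleGraph V) (hN : Neighboring P G G')
    (t : V) (ht : t ∈ T) (S : Set V) (hS : S ⊆ T) :
    |(CN G t S : ℤ) - (CN G' t S : ℤ)| ≤ 1 := by
  obtain ⟨v, hvP, hv⟩ := hN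
  have hvT : v ∉ T := Set.disjoint_left.mp hDisj hvP
  have htv : t ≠ v := fun h => hvT (h ▸ ht)
  have key : {u : V | G.Adj t u ∧ ∃ v' ∈ S, G.Adj u v'} \ {v}
      = {u : V | G'.Adj t u ∧ ∃ v' ∈ S, G'.Adj u v'} \ {v} := by
    ext u
    simp only [Set.mem_diff, Set.mem_setOf_eq, Set.mem_singleton_iff]
    constructor
    · rintro ⟨⟨h1, v', hv'S, h2⟩, huv⟩
      have hv'v : v' ≠ v := fun h => hvT (h ▸ hS hv'S)
      exact ⟨⟨(hv t u htv huv).mp h1, v', hv'S, (hv u v' huv hv'v).mp h2⟩, huv⟩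
    · rintro ⟨⟨h1, v', hv'S, h2⟩, huv⟩
      have hv'v : v' ≠ v := fun h => hvT (h ▸ hS hv'S)
      exact ⟨⟨(hv t u htv huv).mpr h1, v', hv'S, (hv u v' huv hv'v).mpr h2⟩, huv⟩
  have h1 := cn_aux key
  have h2 := cn_aux key.symm
  unfold CN
  rw [abs_le]
  omega
end

section
/- Let V be a finite vertex set partitioned into a protected set P and a targeted set T, restrict attention to simple graphs on V of maximum degree at most d, and for k ≥ 2 define Path_k(G, v, S) to be the number of paths in G from the vertex v to vertices of S of length at most k. Then Path_k has targeted sensitivity at most (k−1)·d^{k−1}: for every pair of neighboring graphs G, G' (both of maximum degree at most d) with respect to (P,T), every t ∈ T, and every S ⊆ T, |Path_k(G,t,S) − Path_k(G',t,S)| ≤ (k−1)·d^{k−1}. -/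
/-- A graph has maximum degree at most `d` if every vertex has at most `d` neighbors. -/
def MaxDegreeLE {V : Type*} (G : SimpleGraph V) (d : ℕ) : Prop :=
  ∀ v : V, Set.ncard {u : V | G.Adj v u} ≤ d

/-- `Path_k(G, v, S)` is the number of paths in `G` from the vertex `v` to
vertices of `S` of length at most `k` (a path is a walk with distinct vertices). -/
noncomputable def PathK {V : Type*} (G : SimpleGraph V) (k : ℕ) (v : V) (S : Set V) : ℕ :=
  Nat.card {p : (u : V) × G.Walk v u // p.1 ∈ S ∧ p.2.IsPath ∧ p.2.length ≤ k}

/-!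
A path counted by `Path_k` either avoids the rewired vertex `v`, and is then a path of both
graphs, or passes through `v`. As `v ∉ T`, such a path splits at `v` into a walk of length
`j + 1 ≤ k - 1` from `t` to `v`, of which there are at most `d ^ j`, and a nonempty path of length
at most `k - (j + 1)` from `v`, of which there are at most `d ^ (k - (j + 1))`. The last bound holds
because after its first step a path cannot go back to the vertex it came from, so it branches in
at most `d - 1` ways, and `1 + (d - 1) * d ^ m ≤ d ^ (m + 1)`.
-/

open Set

theorem Set.ncard_iUnion_le_ncard_mul {ι α : Type*} {s : Set ι} [Finite s] (f : s → Set α) {c : ℕ}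
    (hf : ∀ i, (f i).ncard ≤ c) : (⋃ i, f i).ncard ≤ s.ncard * c := by
  classical
  have := Fintype.ofFinite s
  calc (⋃ i, f i).ncard ≤ ∑ i, (f i).ncard := ncard_iUnion_le_of_fintype f
    _ ≤ ∑ _i : s, c := Finset.sum_le_sum fun i _ => hf i
    _ = s.ncard * c := by
      rw [Finset.sum_const, Finset.card_univ, smul_eq_mul, ← Nat.card_eq_fintype_card,
        Nat.card_coe_set_eq]

namespace SimpleGraph

variable {V : Type*} {G G' : SimpleGraph V}

def pathsFrom (G : SimpleGraph V) (w : V) (m : ℕ) : Set ((u : V) × G.Walk w u) :=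
  {p | p.2.IsPath ∧ p.2.length ≤ m}

instance [Finite V] (w : V) (m : ℕ) : Finite (G.pathsFrom w m) := by
  classical
  have := Fintype.ofFinite V
  refine Finite.of_injective
    (fun p : G.pathsFrom w m => (⟨p.1.1, ⟨p.1.2, p.2.1⟩⟩ : (u : V) × G.Path w u)) ?_
  rintro ⟨⟨u, p⟩, hp⟩ ⟨⟨u', q⟩, hq⟩ h
  simp only [Sigma.mk.inj_iff] at h
  obtain ⟨rfl, h⟩ := h
  simp_all

instance [Finite V] (u v : V) (n : ℕ) : Finite {p : G.Walk u v | p.length = n} := by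
  classical
  have := Fintype.ofFinite V
  infer_instance

theorem ncard_setOf_walk_length_eq_add_one_le [Finite V] {d : ℕ} (hd : MaxDegreeLE G d) (n : ℕ)
    (u v : V) : {p : G.Walk u v | p.length = n + 1}.ncard ≤ d ^ n := by
  induction n generalizing u with
  | zero =>
    rw [pow_zero, ncard_le_one]
    rintro (_ | ⟨_, _ | _⟩) hp (_ | ⟨_, _ | _⟩) hq <;> simp_all
  | succ n ih =>
    rw [Walk.setOfPred_length_eq_add_one,
      ← iUnion_subtype (G.Adj u) fun w => Walk.cons w.2 '' {p : G.Walk w v | p.length = n + 1},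
      pow_succ']
    refine (ncard_iUnion_le_ncard_mul (s := G.neighborSet u) _ fun w => ?_).trans
      (Nat.mul_le_mul_right _ (hd u))
    exact (ncard_image_le).trans (ih w)

theorem eq_sigma_nil_of_nil {w : V} {p : (u : V) × G.Walk w u} (hp : p.2.Nil) : p = ⟨w, .nil⟩ := by
  obtain ⟨u, _ | _⟩ := p
  · rfl
  · simp at hp

theorem pathsFrom_not_nil_snd_mem_subset (w : V) (m : ℕ) (X : Set V) :
    {p ∈ G.pathsFrom w (m + 1) | ¬p.2.Nil ∧ p.2.snd ∈ X} ⊆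
      ⋃ x : ↥(G.neighborSet w ∩ X), (fun q => ⟨q.1, .cons x.2.1 q.2⟩) ''
        {q ∈ G.pathsFrom x m | w ∉ q.2.support} := by
  rintro ⟨u, p⟩ ⟨⟨hpath, hlen⟩, hnil, hX⟩
  have hsupp := p.cons_support_tail hnil
  refine mem_iUnion.mpr ⟨⟨p.snd, p.adj_snd hnil, hX⟩, ⟨u, p.tail⟩, ⟨⟨hpath.tail, ?_⟩, ?_⟩, ?_⟩
  · have := p.length_tail_add_one hnil
    dsimp only at hlen ⊢
    omega
  · have := hpath.support_nodup
    rw [← hsupp] at this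
    exact (List.nodup_cons.mp this).1
  · simp [p.cons_tail_eq hnil]

theorem ncard_pathsFrom_not_nil_snd_mem_le [Finite V] {w : V} {m c : ℕ} (X : Set V)
    (hc : ∀ x, G.Adj w x → {q ∈ G.pathsFrom x m | w ∉ q.2.support}.ncard ≤ c) :
    {p ∈ G.pathsFrom w (m + 1) | ¬p.2.Nil ∧ p.2.snd ∈ X}.ncard ≤
      (G.neighborSet w ∩ X).ncard * c :=
  (ncard_le_ncard (pathsFrom_not_nil_snd_mem_subset w m X)).trans <|
    ncard_iUnion_le_ncard_mul _ fun x => le_trans ncard_image_le (hc x x.2.1)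

theorem ncard_pathsFrom_not_mem_support_le [Finite V] {d : ℕ} (hd : MaxDegreeLE G d) (m : ℕ)
    {w z : V} (hwz : G.Adj w z) : {p ∈ G.pathsFrom w m | z ∉ p.2.support}.ncard ≤ d ^ m := by
  induction m generalizing w z with
  | zero =>
    rw [pow_zero, ncard_le_one]
    rintro ⟨u, p⟩ ⟨⟨-, hp⟩, -⟩ ⟨u', q⟩ ⟨⟨-, hq⟩, -⟩
    rw [eq_sigma_nil_of_nil (Walk.length_eq_zero_iff.mp (Nat.le_zero.mp hp)),
      eq_sigma_nil_of_nil (Walk.length_eq_zero_iff.mp (Nat.le_zero.mp hq))]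
  | succ m ih =>
    have hsplit : {p ∈ G.pathsFrom w (m + 1) | z ∉ p.2.support} ⊆
        {⟨w, .nil⟩} ∪ {p ∈ G.pathsFrom w (m + 1) | ¬p.2.Nil ∧ p.2.snd ∈ ({z}ᶜ : Set V)} := by
      rintro p ⟨hp, hz⟩
      by_cases hnil : p.2.Nil
      · exact .inl (eq_sigma_nil_of_nil hnil)
      · refine .inr ⟨hp, hnil, fun h => hz ?_⟩
        rw [← mem_singleton_iff.mp h, ← p.2.cons_support_tail hnil]
        exact List.mem_cons_of_mem _ p.2.tail.start_mem_support
    have hdeg : (G.neighborSet w ∩ {z}ᶜ).ncard + 1 ≤ d := by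
      rw [← sdiff_eq, ncard_sdiff_singleton_add_one (show z ∈ G.neighborSet w from hwz)]
      exact hd w
    have hstep := ncard_pathsFrom_not_nil_snd_mem_le (w := w) {z}ᶜ fun x hx => ih (G.adj_symm hx)
    calc _ ≤ _ := ncard_le_ncard hsplit
      _ ≤ 1 + (G.neighborSet w ∩ {z}ᶜ).ncard * d ^ m :=
        (ncard_union_le _ _).trans (by rw [ncard_singleton]; omega)
      _ ≤ d ^ (m + 1) := by
        have := Nat.one_le_pow m d (by omega)
        rw [pow_succ]
        nlinarith

theorem ncard_pathsFrom_not_nil_le [Finite V] {d : ℕ} (hd : MaxDegreeLE G d) (m : ℕ) (v : V) :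
    {p ∈ G.pathsFrom v m | ¬p.2.Nil}.ncard ≤ d ^ m := by
  cases m with
  | zero =>
    have hempty : {p ∈ G.pathsFrom v 0 | ¬p.2.Nil} = ∅ :=
      eq_empty_of_forall_notMem fun p ⟨⟨_, hp⟩, hnil⟩ =>
        hnil (Walk.length_eq_zero_iff.mp (Nat.le_zero.mp hp))
    rw [hempty, ncard_empty]
    exact Nat.zero_le _
  | succ m =>
    calc _ = {p ∈ G.pathsFrom v (m + 1) | ¬p.2.Nil ∧ p.2.snd ∈ univ}.ncard := by simp
      _ ≤ (G.neighborSet v ∩ univ).ncard * d ^ m :=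
        ncard_pathsFrom_not_nil_snd_mem_le univ fun x hx =>
          ncard_pathsFrom_not_mem_support_le hd m (G.adj_symm hx)
      _ ≤ d ^ (m + 1) := by
        rw [inter_univ, pow_succ']
        exact Nat.mul_le_mul_right _ (hd v)

theorem pathsFrom_through_subset {t v : V} (hvt : v ≠ t) (k : ℕ) :
    {p ∈ G.pathsFrom t k | v ∈ p.2.support ∧ p.1 ≠ v} ⊆
      (fun qr : G.Walk t v × (u : V) × G.Walk v u => ⟨qr.2.1, qr.1.append qr.2.2⟩) ''
        ⋃ j ∈ Finset.range (k - 1),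
          {q : G.Walk t v | q.length = j + 1} ×ˢ {r ∈ G.pathsFrom v (k - (j + 1)) | ¬r.2.Nil} := by
  classical
  rintro ⟨u, p⟩ ⟨⟨hpath, hlen : p.length ≤ k⟩, hv, hu : u ≠ v⟩
  set q := p.takeUntil v hv
  set r := p.dropUntil v hv
  have hsum : q.length + r.length = p.length := by rw [← Walk.length_append, p.take_spec hv]
  have hq : q.length ≠ 0 := fun h => hvt (Walk.eq_of_length_eq_zero h).symm
  have hr : r.length ≠ 0 := fun h => hu (Walk.eq_of_length_eq_zero h).symm
  refine ⟨(q, ⟨u, r⟩), mem_biUnion (x := q.length - 1) ?_ ⟨?_, ⟨hpath.dropUntil hv, ?_⟩, ?_⟩, ?_⟩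
  · exact Finset.mem_range.mpr (by omega)
  · show q.length = q.length - 1 + 1
    omega
  · show r.length ≤ k - (q.length - 1 + 1)
    omega
  · rwa [← Walk.length_eq_zero_iff]
  · simp [q, r, p.take_spec hv]

theorem ncard_pathsFrom_through_le [Finite V] {d : ℕ} (hd : MaxDegreeLE G d) {t v : V}
    (hvt : v ≠ t) (k : ℕ) :
    {p ∈ G.pathsFrom t k | v ∈ p.2.support ∧ p.1 ≠ v}.ncard ≤ (k - 1) * d ^ (k - 1) := by
  calc _ ≤ _ := ncard_le_ncard (pathsFrom_through_subset hvt k)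
    _ ≤ _ := ncard_image_le
    _ ≤ ∑ j ∈ Finset.range (k - 1), ({q : G.Walk t v | q.length = j + 1} ×ˢ
          {r ∈ G.pathsFrom v (k - (j + 1)) | ¬r.2.Nil}).ncard := Finset.set_ncard_biUnion_le _ _
    _ ≤ ∑ _j ∈ Finset.range (k - 1), d ^ (k - 1) := Finset.sum_le_sum fun j hj => by
      have hjk := Finset.mem_range.mp hj
      rw [ncard_prod, show k - 1 = j + (k - (j + 1)) by omega, pow_add]
      exact Nat.mul_le_mul (ncard_setOf_walk_length_eq_add_one_le hd j t v)
        (ncard_pathsFrom_not_nil_le hd _ v)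
    _ = (k - 1) * d ^ (k - 1) := by simp

theorem sigma_support_injective (t : V) :
    Function.Injective fun p : (u : V) × G.Walk t u => p.2.support := by
  rintro ⟨u, p⟩ ⟨u', q⟩ h
  obtain rfl : u = u' := by
    rw [← p.getLast_support, ← q.getLast_support]
    simp only [h]
  exact congrArg _ (Walk.support_injective h)

theorem edges_mem_edgeSet_of_notMem_support {v : V}
    (hagree : ∀ a b, a ≠ v → b ≠ v → (G.Adj a b ↔ G'.Adj a b)) {t u : V} {p : G.Walk t u}
    (hv : v ∉ p.support) : ∀ e ∈ p.edges, e ∈ G'.edgeSet := by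
  intro e he
  induction e using Sym2.ind with
  | _ a b =>
    exact (hagree a b (fun h => hv (h ▸ p.fst_mem_support_of_mem_edges he))
      (fun h => hv (h ▸ p.snd_mem_support_of_mem_edges he))).mp (p.adj_of_mem_edges he)

theorem image_support_pathsFrom_avoiding_subset {v : V}
    (hagree : ∀ a b, a ≠ v → b ≠ v → (G.Adj a b ↔ G'.Adj a b)) (t : V) (S : Set V) (k : ℕ) :
    (fun p => p.2.support) '' ({p ∈ G.pathsFrom t k | p.1 ∈ S} \ {p | v ∈ p.2.support}) ⊆
      (fun p => p.2.support) '' ({p ∈ G'.pathsFrom t k | p.1 ∈ S} \ {p | v ∈ p.2.support}) := by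
  rintro _ ⟨⟨u, p⟩, ⟨⟨⟨hpath, hlen⟩, hS⟩, hv⟩, rfl⟩
  have hedges := edges_mem_edgeSet_of_notMem_support hagree hv
  refine ⟨⟨u, p.transfer G' hedges⟩, ⟨⟨⟨hpath.transfer hedges, ?_⟩, hS⟩, ?_⟩, ?_⟩ <;>
    simp_all [Walk.length_transfer, Walk.support_transfer]

theorem ncard_pathsFrom_avoiding_eq {v : V}
    (hagree : ∀ a b, a ≠ v → b ≠ v → (G.Adj a b ↔ G'.Adj a b)) (t : V) (S : Set V) (k : ℕ) :
    ({p ∈ G.pathsFrom t k | p.1 ∈ S} \ {p | v ∈ p.2.support}).ncard =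
      ({p ∈ G'.pathsFrom t k | p.1 ∈ S} \ {p | v ∈ p.2.support}).ncard := by
  rw [← ncard_image_of_injective _ (sigma_support_injective t),
    ← ncard_image_of_injective _ (sigma_support_injective t),
    (image_support_pathsFrom_avoiding_subset hagree t S k).antisymm
      (image_support_pathsFrom_avoiding_subset (fun a b ha hb => (hagree a b ha hb).symm) t S k)]

end SimpleGraph

theorem pathK_eq_ncard_inter_add_ncard_sdiff {V : Type*} [Finite V] (G : SimpleGraph V) (k : ℕ)
    (t : V) (S : Set V) (v : V) :
    PathK G k t S = ({p ∈ G.pathsFrom t k | p.1 ∈ S} ∩ {p | v ∈ p.2.support}).ncard +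
      ({p ∈ G.pathsFrom t k | p.1 ∈ S} \ {p | v ∈ p.2.support}).ncard := by
  rw [Set.ncard_inter_add_ncard_sdiff_eq_ncard {p ∈ G.pathsFrom t k | p.1 ∈ S}]
  exact Nat.card_congr (Equiv.subtypeEquivRight fun _ => and_comm)

theorem pathK_targeted_sensitivity_general {V : Type*} [Fintype V]
    (P T : Set V) (hDisj : Disjoint P T)
    (d k : ℕ)
    (G G' : SimpleGraph V) (hdG : MaxDegreeLE G d) (hdG' : MaxDegreeLE G' d)
    (hN : Neighboring P G G')
    (t : V) (ht : t ∈ T) (S : Set V) (hS : S ⊆ T) :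
    |(PathK G k t S : ℤ) - (PathK G' k t S : ℤ)| ≤ ((k - 1 : ℕ) : ℤ) * (d : ℤ) ^ (k - 1) := by
  obtain ⟨v, hvP, hagree⟩ := hN
  have hvT : v ∉ T := Set.disjoint_left.mp hDisj hvP
  have hvt : v ≠ t := fun h => hvT (h ▸ ht)
  have hthrough {H : SimpleGraph V} (hd : MaxDegreeLE H d) :
      (({p ∈ H.pathsFrom t k | p.1 ∈ S} ∩ {p | v ∈ p.2.support}).ncard : ℤ) ≤
        ((k - 1 : ℕ) : ℤ) * (d : ℤ) ^ (k - 1) := by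
    have hsub : {p ∈ H.pathsFrom t k | p.1 ∈ S} ∩ {p | v ∈ p.2.support} ⊆
        {p ∈ H.pathsFrom t k | v ∈ p.2.support ∧ p.1 ≠ v} := by
      rintro p ⟨⟨hp, hpS⟩, hv⟩
      exact ⟨hp, hv, fun h => hvT (hS (h ▸ hpS))⟩
    exact_mod_cast (Set.ncard_le_ncard hsub).trans
      (SimpleGraph.ncard_pathsFrom_through_le hd hvt k)
  rw [pathK_eq_ncard_inter_add_ncard_sdiff G k t S v,
    pathK_eq_ncard_inter_add_ncard_sdiff G' k t S v,
    SimpleGraph.ncard_pathsFrom_avoiding_eq hagree, abs_sub_le_iff]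
  have hG := hthrough hdG
  have hG' := hthrough hdG'
  push_cast
  constructor <;> linarith

/-- For `k ≥ 2`, on graphs of maximum degree at most `d` the statistic `Path_k`
has targeted sensitivity at most `(k−1)·d^(k−1)`: for every partition of the
finite vertex set `V` into a protected set `P` and a targeted set `T`, every
pair of neighboring graphs `G, G'` (both of maximum degree at most `d`) with
respect to `(P, T)`, every `t ∈ T`, and every `S ⊆ T`,
`|Path_k(G,t,S) − Path_k(G',t,S)| ≤ (k−1)·d^(k−1)`. -/
theorem pathK_targeted_sensitivity {V : Type*} [Fintype V]
    (P T : Set V) (hUnion : P ∪ T = Set.univ) (hDisj : Disjoint P T)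
    (d k : ℕ) (hk : 2 ≤ k)
    (G G' : SimpleGraph V) (hdG : MaxDegreeLE G d) (hdG' : MaxDegreeLE G' d)
    (hN : Neighboring P G G')
    (t : V) (ht : t ∈ T) (S : Set V) (hS : S ⊆ T) :
    |(PathK G k t S : ℤ) - (PathK G' k t S : ℤ)| ≤ ((k - 1 : ℕ) : ℤ) * (d : ℤ) ^ (k - 1) :=
  pathK_targeted_sensitivity_general P T hDisj d k G G' hdG hdG' hN t ht S hS
end

section
/- Within the privacy analysis of SearchCom: let f be a statistic of proximity with impact cardinality IC(f), let T̃ ⊆ T, fix arbitrary real noise values ζ_v for each unexamined vertex v and set f̂(v) = f(G,v,T̃) + ζ_v, fix a targeted vertex t and a threshold f̂(t), and let b(G) denote the number of protected vertices v ∈ P with f̂(v) ≥ f̂(t). Then for every pair of graphs G, G' neighboring with respect to (P,T), |b(G) − b(G')| ≤ IC(f); consequently releasing b̂ = b(G) − ν with ν ∼ Lap(2·IC(f)/ε) is (ε/2)-differentially private with respect to rewiring the edges of a single protected vertex. -/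
open MeasureTheory

/-- The impact cardinality of a statistic of proximity `f`: the maximum, over
neighboring graphs `G ∼ G'` and `S ⊆ T`, of the number of vertices `v` with
`f(G,v,S) ≠ f(G',v,S)`. -/
noncomputable def impactCardinality {V : Type*} (P T : Set V)
    (f : SimpleGraph V → V → Set V → ℝ) : ℕ :=
  sSup {m : ℕ | ∃ G G' : SimpleGraph V, ∃ S : Set V, Neighboring P G G' ∧ S ⊆ T ∧
    m = Set.ncard {v : V | f G v S ≠ f G' v S}}

/-- The Laplace distribution `Lap(b)` centered at `0`, with density
`(1/(2b))·exp(−|x|/b)` with respect to Lebesgue measure. -/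
noncomputable def laplace (b : ℝ) : Measure ℝ :=
  volume.withDensity fun x => ENNReal.ofReal ((1 / (2 * b)) * Real.exp (-|x| / b))

/-- Given fixed noise values `ζ` and a fixed threshold `θ` (the noisy value
`f̂(t)` of the fixed targeted vertex `t`), `bCount G` is the number of protected
vertices `v ∈ P` whose perturbed score `f̂(v) = f(G,v,T̃) + ζ v` is at least `θ`. -/
noncomputable def bCount {V : Type*} (P : Set V) (f : SimpleGraph V → V → Set V → ℝ)
    (Ttil : Set V) (ζ : V → ℝ) (θ : ℝ) (G : SimpleGraph V) : ℕ :=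
  Set.ncard {v : V | v ∈ P ∧ θ ≤ f G v Ttil + ζ v}

/-! A single rewiring changes the score of at most `IC(f)` vertices, and the count `b(G)` can only
change at those vertices, so `b` has sensitivity `IC(f)`. Translating the Laplace density by `c`
versus `c'` changes it pointwise by a factor at most `exp(|c - c'| / b)`, which is the usual
Laplace mechanism bound; with `b = 2·IC(f)/ε` this factor is `exp(ε/2)`. -/

open Set in
lemma ncard_setOf_le_add_ncard_ne {α β : Type*} [Finite α] (Q : α → β → Prop) (g g' : α → β) :
    {a | Q a (g a)}.ncard ≤ {a | Q a (g' a)}.ncard + {a | g a ≠ g' a}.ncard := by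
  refine (ncard_le_ncard ?_ (toFinite _)).trans (ncard_union_le _ _)
  intro a ha
  by_cases h : g a = g' a
  · exact Or.inl (show Q a (g' a) from h ▸ ha)
  · exact Or.inr h

lemma ncard_ne_le_impactCardinality {V : Type*} [Finite V] {P T : Set V}
    {f : SimpleGraph V → V → Set V → ℝ} {G G' : SimpleGraph V} {S : Set V}
    (hN : Neighboring P G G') (hS : S ⊆ T) :
    {v | f G v S ≠ f G' v S}.ncard ≤ impactCardinality P T f := by
  refine le_csSup ⟨Nat.card V, ?_⟩ ⟨G, G', S, hN, hS, rfl⟩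
  rintro m ⟨-, -, -, -, -, rfl⟩
  exact Set.ncard_le_card _

lemma abs_bCount_sub_le_impactCardinality {V : Type*} [Finite V] {P T : Set V}
    {f : SimpleGraph V → V → Set V → ℝ} {Ttil : Set V} (hTtil : Ttil ⊆ T) (ζ : V → ℝ) (θ : ℝ)
    {G G' : SimpleGraph V} (hN : Neighboring P G G') :
    |(bCount P f Ttil ζ θ G : ℤ) - (bCount P f Ttil ζ θ G' : ℤ)| ≤
      (impactCardinality P T f : ℤ) := by
  have hIC := ncard_ne_le_impactCardinality (f := f) hN hTtil
  have hle : bCount P f Ttil ζ θ G ≤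
      bCount P f Ttil ζ θ G' + {v | f G v Ttil ≠ f G' v Ttil}.ncard :=
    ncard_setOf_le_add_ncard_ne (fun v x => v ∈ P ∧ θ ≤ x + ζ v) (f G · Ttil) (f G' · Ttil)
  have hge : bCount P f Ttil ζ θ G' ≤
      bCount P f Ttil ζ θ G + {v | f G v Ttil ≠ f G' v Ttil}.ncard := by
    simpa only [bCount, ne_comm] using
      ncard_setOf_le_add_ncard_ne (fun v x => v ∈ P ∧ θ ≤ x + ζ v) (f G' · Ttil) (f G · Ttil)
  rw [abs_sub_le_iff]
  omega

lemma laplace_map_sub (b c : ℝ) :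
    (laplace b).map (fun ν => c - ν) =
      volume.withDensity fun y => ENNReal.ofReal ((1 / (2 * b)) * Real.exp (-|c - y| / b)) := by
  have hm : Measurable fun ν : ℝ => c - ν := measurable_const.sub measurable_id
  ext S hS
  rw [Measure.map_apply hm hS, laplace, withDensity_apply _ (hm hS), withDensity_apply _ hS,
    ← lintegral_indicator (hm hS), ← lintegral_indicator hS]
  have hdens : Measurable fun y : ℝ => ENNReal.ofReal ((1 / (2 * b)) * Real.exp (-|c - y| / b)) := by
    fun_prop
  rw [← (Measure.measurePreserving_sub_left volume c).lintegral_comp (hdens.indicator hS)]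
  congr 1
  ext x
  simp only [Set.indicator, sub_sub_cancel]
  rfl

lemma exp_neg_abs_sub_div_le {b c c' Δ : ℝ} (hb : 0 ≤ b) (h : |c - c'| ≤ Δ) (y : ℝ) :
    Real.exp (-|c - y| / b) ≤ Real.exp (Δ / b) * Real.exp (-|c' - y| / b) := by
  rw [← Real.exp_add, Real.exp_le_exp]
  have hdiff : (|c' - y| - |c - y|) / b ≤ Δ / b := by
    refine div_le_div_of_nonneg_right ?_ hb
    calc |c' - y| - |c - y| ≤ |(c' - y) - (c - y)| := abs_sub_abs_le_abs_sub _ _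
      _ = |c - c'| := by rw [sub_sub_sub_cancel_right, abs_sub_comm]
      _ ≤ Δ := h
  rw [sub_div] at hdiff
  linarith [neg_div b |c - y|, neg_div b |c' - y|]

lemma laplace_map_sub_le_exp_mul {b c c' Δ : ℝ} (hb : 0 ≤ b) (h : |c - c'| ≤ Δ)
    {S : Set ℝ} (hS : MeasurableSet S) :
    (laplace b).map (fun ν => c - ν) S ≤
      ENNReal.ofReal (Real.exp (Δ / b)) * (laplace b).map (fun ν => c' - ν) S := by
  rw [laplace_map_sub, laplace_map_sub, withDensity_apply _ hS, withDensity_apply _ hS,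
    ← lintegral_const_mul' _ _ ENNReal.ofReal_ne_top]
  refine lintegral_mono fun y => ?_
  rw [← ENNReal.ofReal_mul (Real.exp_nonneg _)]
  refine ENNReal.ofReal_le_ofReal ?_
  calc 1 / (2 * b) * Real.exp (-|c - y| / b)
      ≤ 1 / (2 * b) * (Real.exp (Δ / b) * Real.exp (-|c' - y| / b)) := by
        gcongr
        exact exp_neg_abs_sub_div_le hb h y
    _ = Real.exp (Δ / b) * (1 / (2 * b) * Real.exp (-|c' - y| / b)) := by ring

theorem bCount_release_private_general {V : Type*} [Fintype V]
    (P T : Set V)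
    (f : SimpleGraph V → V → Set V → ℝ)
    (Ttil : Set V) (hTtil : Ttil ⊆ T)
    (ζ : V → ℝ) (θ : ℝ)
    (ε : ℝ) (hε : 0 < ε)
    (G G' : SimpleGraph V) (hN : Neighboring P G G') :
    |(bCount P f Ttil ζ θ G : ℤ) - (bCount P f Ttil ζ θ G' : ℤ)| ≤
        (impactCardinality P T f : ℤ) ∧
      ∀ S : Set ℝ, MeasurableSet S →
        (laplace (2 * (impactCardinality P T f : ℝ) / ε)).map
            (fun ν => (bCount P f Ttil ζ θ G : ℝ) - ν) S ≤
          ENNReal.ofReal (Real.exp (ε / 2)) *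
            (laplace (2 * (impactCardinality P T f : ℝ) / ε)).map
              (fun ν => (bCount P f Ttil ζ θ G' : ℝ) - ν) S := by
  set k := impactCardinality P T f
  have hsens := abs_bCount_sub_le_impactCardinality (f := f) hTtil ζ θ hN
  have hsensℝ : |(bCount P f Ttil ζ θ G : ℝ) - bCount P f Ttil ζ θ G'| ≤ k := by
    exact_mod_cast hsens
  -- if `k = 0` the scale `2 * k / ε` is `0`, and `k / 0 = 0`
  have hscale : (k : ℝ) / (2 * k / ε) ≤ ε / 2 := by
    rcases (Nat.cast_nonneg k : (0 : ℝ) ≤ k).eq_or_lt with hk | hk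
    · rw [← hk]; simp only [zero_div]; positivity
    · exact le_of_eq (by field_simp)
  refine ⟨hsens, fun S hS => ?_⟩
  calc _ ≤ ENNReal.ofReal (Real.exp (k / (2 * k / ε))) * _ :=
        laplace_map_sub_le_exp_mul (by positivity) hsensℝ hS
    _ ≤ _ := by gcongr

/-- Within the privacy analysis of `SearchCom`: for fixed noise values `ζ`, a
fixed targeted vertex `t ∈ T` and threshold `θ = f̂(t)`, and `T̃ ⊆ T`, for every
pair of graphs `G, G'` neighboring with respect to the partition `(P, T)` we
have `|b(G) − b(G')| ≤ IC(f)`; consequently, releasing `b̂ = b(G) − ν` with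
`ν ∼ Lap(2·IC(f)/ε)` is `(ε/2)`-differentially private with respect to rewiring
the edges of a single protected vertex. -/
theorem bCount_release_private {V : Type*} [Fintype V]
    (P T : Set V) (hUnion : P ∪ T = Set.univ) (hDisj : Disjoint P T)
    (f : SimpleGraph V → V → Set V → ℝ)
    (Ttil : Set V) (hTtil : Ttil ⊆ T)
    (ζ : V → ℝ) (t : V) (ht : t ∈ T) (θ : ℝ)
    (ε : ℝ) (hε : 0 < ε)
    (G G' : SimpleGraph V) (hN : Neighboring P G G') :
    |(bCount P f Ttil ζ θ G : ℤ) - (bCount P f Ttil ζ θ G' : ℤ)| ≤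
        (impactCardinality P T f : ℤ) ∧
      ∀ S : Set ℝ, MeasurableSet S →
        (laplace (2 * (impactCardinality P T f : ℝ) / ε)).map
            (fun ν => (bCount P f Ttil ζ θ G : ℝ) - ν) S ≤
          ENNReal.ofReal (Real.exp (ε / 2)) *
            (laplace (2 * (impactCardinality P T f : ℝ) / ε)).map
              (fun ν => (bCount P f Ttil ζ θ G' : ℝ) - ν) S :=
  bCount_release_private_general P T f Ttil hTtil ζ θ ε hε G G' hN
end

section
/- Let V be a finite vertex set partitioned into a protected set P and a targeted set T, and restrict attention to simple graphs on V of maximum degree at most d. For k ≥ 1, define Flow_k(G, v, S) to be the value of the maximum flow that can be routed between the vertex v and the set S using only paths of length at most k, with unit capacity on every edge. Then Flow_k has targeted sensitivity at most d: for every pair of neighboring graphs G, G' (both of maximum degree at most d) with respect to (P,T), every t ∈ T, and every S ⊆ T, |Flow_k(G,t,S) − Flow_k(G',t,S)| ≤ d. -/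
/-- `Flow_k(G, v, S)` is the value of the maximum flow that can be routed between
the vertex `v` and the set `S` using only paths of length at most `k`, with unit
capacity on every edge.  Since all capacities are one, this is the maximum
cardinality of a collection of pairwise edge-disjoint paths from `v` to vertices
of `S`, each of length at most `k`. -/
noncomputable def FlowK {V : Type*} (G : SimpleGraph V) (k : ℕ) (v : V) (S : Set V) : ℕ :=
  sSup {n : ℕ | ∃ F : Finset ((u : V) × G.Walk v u),
    F.card = n ∧
    (∀ p ∈ F, p.1 ∈ S ∧ p.2.IsPath ∧ 1 ≤ p.2.length ∧ p.2.length ≤ k) ∧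
    (∀ p ∈ F, ∀ q ∈ F, p ≠ q → ∀ e ∈ p.2.edges, e ∉ q.2.edges)}

/-! A packing of edge-disjoint paths is split according to whether its paths use an edge at the
rewired vertex `w`. Disjointness makes the paths through `w` use distinct edges at `w`, so there
are at most `deg w ≤ d` of them; the others avoid `w` and so survive the rewiring as a packing in
the other graph. Hence each of the two flow values exceeds the other by at most `d`. -/

open SimpleGraph Finset

section

variable {V : Type*}

structure IsShortPathPacking (G : SimpleGraph V) (k : ℕ) (v : V) (S : Set V)
    (F : Finset ((u : V) × G.Walk v u)) : Prop where
  isShortPath : ∀ p ∈ F, p.1 ∈ S ∧ p.2.IsPath ∧ 1 ≤ p.2.length ∧ p.2.length ≤ k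
  edges_disjoint : ∀ p ∈ F, ∀ q ∈ F, p ≠ q → ∀ e ∈ p.2.edges, e ∉ q.2.edges

namespace IsShortPathPacking

variable {G : SimpleGraph V} {k : ℕ} {v : V} {S : Set V} {F : Finset ((u : V) × G.Walk v u)}

lemma mono (hF : IsShortPathPacking G k v S F) {F' : Finset ((u : V) × G.Walk v u)}
    (h : F' ⊆ F) : IsShortPathPacking G k v S F' :=
  ⟨fun p hp => hF.isShortPath p (h hp),
    fun p hp q hq => hF.edges_disjoint p (h hp) q (h hq)⟩

lemma edges_ne_nil (hF : IsShortPathPacking G k v S F) {p : (u : V) × G.Walk v u}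
    (hp : p ∈ F) : p.2.edges ≠ [] := by
  rw [← List.length_pos_iff, Walk.length_edges]
  exact (hF.isShortPath p hp).2.2.1

lemma card_le_card_of_forall_exists_edge_mem (hF : IsShortPathPacking G k v S F)
    (E : Finset (Sym2 V)) (hE : ∀ p ∈ F, ∃ e ∈ p.2.edges, e ∈ E) : #F ≤ #E := by
  refine card_le_card_of_forall_subsingleton (fun p e => e ∈ p.2.edges)
    (fun p hp => (hE p hp).imp fun e he => ⟨he.2, he.1⟩) ?_
  rintro e - p ⟨hp, hep⟩ q ⟨hq, heq⟩
  by_contra hpq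
  exact hF.edges_disjoint p hp q hq hpq e hep heq

lemma card_le_card_sym2 [Fintype V] (hF : IsShortPathPacking G k v S F) :
    #F ≤ Fintype.card (Sym2 V) := by
  classical
  refine hF.card_le_card_of_forall_exists_edge_mem univ fun p hp => ?_
  obtain ⟨e, he⟩ := List.exists_mem_of_ne_nil _ (hF.edges_ne_nil hp)
  exact ⟨e, he, mem_univ e⟩

lemma exists_transfer (hF : IsShortPathPacking G k v S F) (H : SimpleGraph V)
    (hH : ∀ p ∈ F, ∀ e ∈ p.2.edges, e ∈ H.edgeSet) :
    ∃ F' : Finset ((u : V) × H.Walk v u), #F' = #F ∧ IsShortPathPacking H k v S F' := by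
  classical
  let f : F → (u : V) × H.Walk v u := fun p => ⟨p.1.1, p.1.2.transfer H (hH p.1 p.2)⟩
  have edges_f (p : F) : (f p).2.edges = p.1.2.edges := Walk.edges_transfer _ _
  -- two distinct paths of the packing have disjoint, nonempty edge lists, so `f` is injective
  have f_inj : Function.Injective f := by
    intro p q hpq
    by_contra hne
    obtain ⟨e, he⟩ := List.exists_mem_of_ne_nil _ (hF.edges_ne_nil p.2)
    refine hF.edges_disjoint p.1 p.2 q.1 q.2 (Subtype.coe_ne_coe.mpr hne) e he ?_
    rwa [← edges_f q, ← hpq, edges_f p]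
  refine ⟨univ.image f, by rw [card_image_of_injective _ f_inj, card_univ, Fintype.card_coe],
    ⟨?_, ?_⟩⟩
  · simp only [mem_image, mem_univ, true_and, forall_exists_index, forall_apply_eq_imp_iff]
    intro p
    obtain ⟨hS, hpath, hpos, hlen⟩ := hF.isShortPath p.1 p.2
    exact ⟨hS, hpath.transfer _, by rwa [Walk.length_transfer],
      by rwa [Walk.length_transfer]⟩
  · simp only [mem_image, mem_univ, true_and, forall_exists_index, forall_apply_eq_imp_iff]
    intro p q hpq e
    rw [edges_f, edges_f]
    exact hF.edges_disjoint p.1 p.2 q.1 q.2 (fun h => hpq (congrArg f (Subtype.ext h))) e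

end IsShortPathPacking

lemma card_le_flowK [Fintype V] {G : SimpleGraph V} {k : ℕ} {v : V} {S : Set V}
    {F : Finset ((u : V) × G.Walk v u)} (hF : IsShortPathPacking G k v S F) :
    #F ≤ FlowK G k v S :=
  le_csSup ⟨Fintype.card (Sym2 V), by
    rintro n ⟨F, rfl, hpath, hdisj⟩
    exact IsShortPathPacking.card_le_card_sym2 ⟨hpath, hdisj⟩⟩ ⟨F, rfl, hF.1, hF.2⟩

lemma flowK_le_of_forall_card_le {G : SimpleGraph V} {k : ℕ} {v : V} {S : Set V} {m : ℕ}
    (h : ∀ F, IsShortPathPacking G k v S F → #F ≤ m) : FlowK G k v S ≤ m :=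
  csSup_le ⟨0, ∅, rfl, by simp, by simp⟩ fun _ ⟨F, hn, hpath, hdisj⟩ =>
    hn ▸ h F ⟨hpath, hdisj⟩

lemma mem_edgeSet_of_agree_off {G G' : SimpleGraph V} {w : V}
    (hagree : ∀ a b : V, a ≠ w → b ≠ w → (G.Adj a b ↔ G'.Adj a b))
    {e : Sym2 V} (he : e ∈ G.edgeSet) (hw : w ∉ e) : e ∈ G'.edgeSet := by
  induction e using Sym2.ind with
  | h a b =>
    exact (hagree a b (fun h => hw (h ▸ Sym2.mem_mk_left a b))
      (fun h => hw (h ▸ Sym2.mem_mk_right a b))).mp he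

lemma flowK_le_flowK_add_ncard_neighborSet [Fintype V] {G G' : SimpleGraph V} {w : V}
    (hagree : ∀ a b : V, a ≠ w → b ≠ w → (G.Adj a b ↔ G'.Adj a b))
    (k : ℕ) (t : V) (S : Set V) :
    FlowK G k t S ≤ FlowK G' k t S + (G.neighborSet w).ncard := by
  classical
  refine flowK_le_of_forall_card_le fun F hF => ?_
  let throughW := F.filter fun p => ∃ e ∈ p.2.edges, w ∈ e
  let avoidingW := F.filter fun p => ¬∃ e ∈ p.2.edges, w ∈ e
  have card_throughW : #throughW ≤ (G.neighborSet w).ncard := by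
    calc #throughW ≤ #(G.incidenceSet w).toFinset := by
          refine (hF.mono (filter_subset _ _)).card_le_card_of_forall_exists_edge_mem _
            fun p hp => ?_
          obtain ⟨e, he, hwe⟩ := (mem_filter.mp hp).2
          exact ⟨e, he, Set.mem_toFinset.mpr ⟨p.2.edges_subset_edgeSet he, hwe⟩⟩
      _ = (G.neighborSet w).ncard := by
          rw [← Set.ncard_eq_toFinset_card']
          exact Nat.card_congr (G.incidenceSetEquivNeighborSet w)
  have card_avoidingW : #avoidingW ≤ FlowK G' k t S := by
    obtain ⟨F', hcard, hF'⟩ := (hF.mono (filter_subset _ _)).exists_transfer G' fun p hp e he =>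
      mem_edgeSet_of_agree_off hagree (p.2.edges_subset_edgeSet he)
        fun hwe => (mem_filter.mp hp : p ∈ F ∧ ¬∃ e ∈ p.2.edges, w ∈ e).2 ⟨e, he, hwe⟩
    exact hcard ▸ card_le_flowK hF'
  have hsplit : #F = #throughW + #avoidingW := (card_filter_add_card_filter_not _).symm
  omega

end

theorem flowK_targeted_sensitivity_general {V : Type*} [Fintype V]
    (P : Set V)
    (d k : ℕ)
    (G G' : SimpleGraph V) (hdG : MaxDegreeLE G d) (hdG' : MaxDegreeLE G' d)
    (hN : Neighboring P G G')
    (t : V) (S : Set V) :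
    |(FlowK G k t S : ℤ) - (FlowK G' k t S : ℤ)| ≤ (d : ℤ) := by
  obtain ⟨w, -, hagree⟩ := hN
  have hGG' := flowK_le_flowK_add_ncard_neighborSet hagree k t S
  have hG'G := flowK_le_flowK_add_ncard_neighborSet
    (fun a b ha hb => (hagree a b ha hb).symm) k t S
  have hw : (G.neighborSet w).ncard ≤ d := hdG w
  have hw' : (G'.neighborSet w).ncard ≤ d := hdG' w
  rw [abs_sub_le_iff]
  omega

/-- On graphs of maximum degree at most `d`, the statistic `Flow_k` has targeted
sensitivity at most `d`: for every partition of the finite vertex set `V` into a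
protected set `P` and a targeted set `T`, every `k ≥ 1`, every pair of
neighboring graphs `G, G'` (both of maximum degree at most `d`) with respect to
`(P, T)`, every `t ∈ T`, and every `S ⊆ T`,
`|Flow_k(G,t,S) − Flow_k(G',t,S)| ≤ d`. -/
theorem flowK_targeted_sensitivity {V : Type*} [Fintype V]
    (P T : Set V) (hUnion : P ∪ T = Set.univ) (hDisj : Disjoint P T)
    (d k : ℕ) (hk : 1 ≤ k)
    (G G' : SimpleGraph V) (hdG : MaxDegreeLE G d) (hdG' : MaxDegreeLE G' d)
    (hN : Neighboring P G G')
    (t : V) (ht : t ∈ T) (S : Set V) (hS : S ⊆ T) :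
    |(FlowK G k t S : ℤ) - (FlowK G' k t S : ℤ)| ≤ (d : ℤ) :=
  flowK_targeted_sensitivity_general P d k G G' hdG hdG' hN t S
end
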